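/- arXiv:1703.02263 — 2 statements merged into one kernel-verified Lean document; each statement's English description precedes it below -/
import Mathlib

section
/- Let M = K(a,b,c,d) be a 4×4 real K3 matrix whose four eigenvalues a+b+c+d, a+b−c−d, a−b+c−d, a−b−c+d are pairwise distinct, and suppose Q is a real 4×4 matrix with exp(Q) = M. Then Q has K3 form; moreover all four eigenvalues of M are strictly positive and Q = S · diag(log(a+b+c+d), log(a+b−c−d), log(a−b+c−d), log(a−b−c+d)) · S⁻¹, the principal logarithm of M. -/
/-- The Kimura 3ST matrix `K(a,b,c,d)`. -/
def K {α : Type*} (a b c d : α) : Matrix (Fin 4) (Fin 4) α :=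
  !![a, b, c, d;
     b, a, d, c;
     c, d, a, b;
     d, c, b, a]

/-- The 4×4 Hadamard matrix `S` (over ℝ). -/
def S : Matrix (Fin 4) (Fin 4) ℝ :=
  !![1,  1,  1,  1;
     1,  1, -1, -1;
     1, -1,  1, -1;
     1, -1, -1,  1]

/-!
Conjugation by the Hadamard matrix `S` diagonalises every K3 matrix, so `D = S⁻¹ Q S` satisfies
`exp D = diag λ` with `λ` the (distinct) eigenvalues of `M`. Since `D` commutes with its
exponential, and only diagonal matrices commute with a diagonal matrix with distinct entries,
`D = diag μ` with `exp μᵢ = λᵢ`. Hence `λᵢ > 0`, `μᵢ = log λᵢ`, and `Q = S diag(log λ) S⁻¹`,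
which is again of K3 form.
-/

open Function

namespace Matrix

variable {n α : Type*} [Fintype n] [DecidableEq n]

theorem isDiag_of_commute_diagonal [CommRing α] [NoZeroDivisors α] {A : Matrix n n α}
    {d : n → α} (hd : Injective d) (h : Commute A (diagonal d)) : A.IsDiag := by
  intro i j hij
  have hij' : A i j * d j = d i * A i j := by
    simpa only [mul_diagonal, diagonal_mul] using congrFun (congrFun h.eq i) j
  have : A i j * (d j - d i) = 0 := by linear_combination hij'
  exact (mul_eq_zero.mp this).resolve_right (sub_ne_zero.mpr (hd.ne (Ne.symm hij)))

theorem eq_diagonal_log_of_exp_eq_diagonal {D : Matrix n n ℝ} {v : n → ℝ} (hv : Injective v)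
    (hexp : NormedSpace.exp D = diagonal v) :
    (∀ i, 0 < v i) ∧ D = diagonal (fun i => Real.log (v i)) := by
  have hdiag : D.IsDiag :=
    isDiag_of_commute_diagonal hv (hexp ▸ (Commute.refl D).exp_right)
  have hexp_diag : ∀ i, Real.exp (D i i) = v i := by
    intro i
    rw [← hdiag.diagonal_diag, exp_diagonal] at hexp
    simpa [Real.exp_eq_exp_ℝ] using congrFun (congrFun hexp i) i
  refine ⟨fun i => hexp_diag i ▸ Real.exp_pos _, ?_⟩
  rw [← hdiag.diagonal_diag]
  congr 1
  funext i
  rw [← hexp_diag i, Real.log_exp, diag_apply]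

theorem eq_conj_diagonal_log_of_exp_eq {Q P : Matrix n n ℝ} (hP : IsUnit P) {v : n → ℝ}
    (hv : Injective v) (hexp : NormedSpace.exp Q = P * diagonal v * P⁻¹) :
    (∀ i, 0 < v i) ∧ Q = P * diagonal (fun i => Real.log (v i)) * P⁻¹ := by
  have hdet := (isUnit_iff_isUnit_det P).mp hP
  have hexp_conj : NormedSpace.exp (P⁻¹ * Q * P) = diagonal v := by
    rw [exp_conj' P Q hP, hexp]
    simp only [Matrix.mul_assoc, nonsing_inv_mul_cancel_left _ _ hdet, nonsing_inv_mul _ hdet,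
      mul_one]
  obtain ⟨hpos, hlog⟩ := eq_diagonal_log_of_exp_eq_diagonal hv hexp_conj
  refine ⟨hpos, ?_⟩
  rw [← hlog]
  simp only [Matrix.mul_assoc, mul_nonsing_inv_cancel_left _ _ hdet, mul_nonsing_inv _ hdet,
    mul_one]

end Matrix

open Matrix

theorem S_mul_S : S * S = (4 : ℝ) • 1 := by
  ext i j
  fin_cases i <;> fin_cases j <;> simp [S, mul_apply, Fin.sum_univ_four, one_apply] <;> norm_num

theorem S_mul_smul_S : S * ((4 : ℝ)⁻¹ • S) = 1 := by
  rw [Matrix.mul_smul, S_mul_S, smul_smul]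
  norm_num

theorem S_inv : S⁻¹ = (4 : ℝ)⁻¹ • S := inv_eq_right_inv S_mul_smul_S

theorem isUnit_S : IsUnit S :=
  (isUnit_iff_isUnit_det S).mpr (isUnit_det_of_right_inverse S_mul_smul_S)

theorem S_mul_diagonal_mul_S_inv (v : Fin 4 → ℝ) :
    S * diagonal v * S⁻¹ =
      K ((v 0 + v 1 + v 2 + v 3) / 4) ((v 0 + v 1 - v 2 - v 3) / 4)
        ((v 0 - v 1 + v 2 - v 3) / 4) ((v 0 - v 1 - v 2 + v 3) / 4) := by
  rw [S_inv, Matrix.mul_smul]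
  ext i j
  simp only [Matrix.smul_apply, mul_apply, Fin.sum_univ_four, smul_eq_mul]
  fin_cases i <;> fin_cases j <;> simp [S, K] <;> ring

theorem K_eq_S_mul_diagonal_mul_S_inv (a b c d : ℝ) :
    K a b c d =
      S * diagonal ![a + b + c + d, a + b - c - d, a - b + c - d, a - b - c + d] * S⁻¹ := by
  rw [S_mul_diagonal_mul_S_inv]
  congr 1 <;> simp <;> ring

/-- If a real K3 matrix `M = K(a,b,c,d)` has pairwise distinct eigenvalues and a real
logarithm `Q`, then `Q` has K3 form, the eigenvalues of `M` are strictly positive, and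
`Q` is the principal logarithm of `M`. -/
theorem stmt_8 (a b c d : ℝ)
    (h12 : a + b + c + d ≠ a + b - c - d) (h13 : a + b + c + d ≠ a - b + c - d)
    (h14 : a + b + c + d ≠ a - b - c + d) (h23 : a + b - c - d ≠ a - b + c - d)
    (h24 : a + b - c - d ≠ a - b - c + d) (h34 : a - b + c - d ≠ a - b - c + d)
    (Q : Matrix (Fin 4) (Fin 4) ℝ)
    (hexp : NormedSpace.exp Q = K a b c d) :
    (∃ α β γ δ : ℝ, Q = K α β γ δ) ∧
    0 < a + b + c + d ∧ 0 < a + b - c - d ∧ 0 < a - b + c - d ∧ 0 < a - b - c + d ∧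
    Q = S * Matrix.diagonal
        ![Real.log (a + b + c + d), Real.log (a + b - c - d),
          Real.log (a - b + c - d), Real.log (a - b - c + d)]
      * S⁻¹ := by
  have hinj : Injective ![a + b + c + d, a + b - c - d, a - b + c - d, a - b - c + d] := by
    simp [Injective, Fin.forall_fin_succ, h12, h13, h14, h23, h24, h34, h12.symm, h13.symm,
      h14.symm, h23.symm, h24.symm, h34.symm]
  obtain ⟨hpos, hQ⟩ := eq_conj_diagonal_log_of_exp_eq isUnit_S hinj
    (hexp.trans (K_eq_S_mul_diagonal_mul_S_inv a b c d))
  have hlog : (fun i => Real.log (![a + b + c + d, a + b - c - d, a - b + c - d,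
      a - b - c + d] i)) = ![Real.log (a + b + c + d), Real.log (a + b - c - d),
        Real.log (a - b + c - d), Real.log (a - b - c + d)] := by
    funext i; fin_cases i <;> rfl
  rw [hlog] at hQ
  exact ⟨⟨_, _, _, _, hQ.trans (S_mul_diagonal_mul_S_inv _)⟩, hpos 0, hpos 1, hpos 2, hpos 3, hQ⟩
end

section
/- Let M = K(a,b,b,b) be a Jukes-Cantor Markov matrix (so a, b ≥ 0 and a + 3b = 1), and set x := a − b. Then M is embeddable (there exists a rate matrix Q with exp(Q) = M) if and only if x > 0; moreover, if x > 0 then M is JC-embeddable: the Jukes-Cantor matrix Q = K((3/4)·log x, −(1/4)·log x, −(1/4)·log x, −(1/4)·log x) is a rate matrix with exp(Q) = M. -/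
/-- A rate matrix: nonnegative off-diagonal entries, rows sum to 0. -/
def IsRate {k : ℕ} (Q : Matrix (Fin k) (Fin k) ℝ) : Prop :=
  (∀ i j, i ≠ j → 0 ≤ Q i j) ∧ ∀ i, ∑ j, Q i j = 0

open Matrix

theorem Matrix.det_exp_pos {n : Type*} [Fintype n] [DecidableEq n] (A : Matrix n n ℝ) :
    0 < (NormedSpace.exp A).det := by
  have hA : A = 2 • ((2 : ℝ)⁻¹ • A) := by
    rw [two_nsmul, ← add_smul]
    norm_num
  rw [hA, exp_nsmul, det_pow]
  have hdet := ((isUnit_iff_isUnit_det _).mp (Matrix.isUnit_exp ((2 : ℝ)⁻¹ • A))).ne_zero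
  positivity

def hadamard4 : Matrix (Fin 4) (Fin 4) ℝ :=
  !![1, 1, 1, 1; 1, 1, -1, -1; 1, -1, 1, -1; 1, -1, -1, 1]

lemma hadamard4_mul_smul_self : hadamard4 * ((4 : ℝ)⁻¹ • hadamard4) = 1 := by
  ext i j
  fin_cases i <;> fin_cases j <;>
    norm_num [hadamard4, mul_apply, Fin.sum_univ_four, one_apply, cons_val_two, cons_val_three]

lemma isUnit_hadamard4 : IsUnit hadamard4 :=
  .of_mul_eq_one _ hadamard4_mul_smul_self

lemma K_jc_eq_conj_diagonal (a b : ℝ) :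
    K a b b b = hadamard4 * diagonal ![a + 3 * b, a - b, a - b, a - b] * hadamard4⁻¹ := by
  rw [inv_eq_right_inv hadamard4_mul_smul_self]
  ext i j
  fin_cases i <;> fin_cases j <;>
    simp [hadamard4, K, mul_apply, vecMul_diagonal, Fin.sum_univ_four] <;> ring

lemma det_K_jc (a b : ℝ) : (K a b b b).det = (a + 3 * b) * (a - b) ^ 3 := by
  rw [K_jc_eq_conj_diagonal, det_conj isUnit_hadamard4, det_diagonal, Fin.prod_univ_four]
  simp
  ring

lemma exp_K_jc (a b : ℝ) :
    NormedSpace.exp (K a b b b) =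
      K ((Real.exp (a + 3 * b) + 3 * Real.exp (a - b)) / 4)
        ((Real.exp (a + 3 * b) - Real.exp (a - b)) / 4)
        ((Real.exp (a + 3 * b) - Real.exp (a - b)) / 4)
        ((Real.exp (a + 3 * b) - Real.exp (a - b)) / 4) := by
  rw [K_jc_eq_conj_diagonal, exp_conj _ _ isUnit_hadamard4, exp_diagonal, K_jc_eq_conj_diagonal]
  congr
  ext i
  fin_cases i <;> simp [Real.exp_eq_exp_ℝ] <;> ring

lemma isRate_K_jc {a b : ℝ} (hb : 0 ≤ b) (hab : a + 3 * b = 0) : IsRate (K a b b b) := by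
  constructor
  · intro i j hij
    fin_cases i <;> fin_cases j <;> simp_all [K]
  · intro i
    fin_cases i <;> simp [K, Fin.sum_univ_four] <;> linarith

lemma sub_pos_of_exp_eq_K_jc {Q : Matrix (Fin 4) (Fin 4) ℝ} {a b : ℝ} (hab : a + 3 * b = 1)
    (hQ : NormedSpace.exp Q = K a b b b) : 0 < a - b := by
  have hdet := det_exp_pos Q
  rw [hQ, det_K_jc, hab, one_mul] at hdet
  exact (Odd.pow_pos_iff (by decide)).mp hdet

lemma isRate_K_jc_log_and_exp_eq {a b : ℝ} (hb : 0 ≤ b) (hab : a + 3 * b = 1) (hx : 0 < a - b) :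
    IsRate (K ((3 / 4) * Real.log (a - b)) (-(1 / 4) * Real.log (a - b))
      (-(1 / 4) * Real.log (a - b)) (-(1 / 4) * Real.log (a - b))) ∧
    NormedSpace.exp (K ((3 / 4) * Real.log (a - b)) (-(1 / 4) * Real.log (a - b))
      (-(1 / 4) * Real.log (a - b)) (-(1 / 4) * Real.log (a - b))) = K a b b b := by
  set L := Real.log (a - b)
  have hL : L ≤ 0 := Real.log_nonpos hx.le (by linarith)
  refine ⟨isRate_K_jc (by linarith) (by ring), ?_⟩
  rw [exp_K_jc, show 3 / 4 * L + 3 * (-(1 / 4) * L) = 0 by ring,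
    show 3 / 4 * L - -(1 / 4) * L = L by ring, Real.exp_zero, Real.exp_log hx]
  congr 1 <;> linarith

theorem stmt_16_general (a b : ℝ) (hb : 0 ≤ b) (hab : a + 3 * b = 1) :
    ((∃ Q : Matrix (Fin 4) (Fin 4) ℝ, IsRate Q ∧ NormedSpace.exp Q = K a b b b) ↔
      0 < a - b) ∧
    (0 < a - b →
      IsRate (K ((3 / 4) * Real.log (a - b)) (-(1 / 4) * Real.log (a - b))
        (-(1 / 4) * Real.log (a - b)) (-(1 / 4) * Real.log (a - b))) ∧
      NormedSpace.exp (K ((3 / 4) * Real.log (a - b)) (-(1 / 4) * Real.log (a - b))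
        (-(1 / 4) * Real.log (a - b)) (-(1 / 4) * Real.log (a - b))) = K a b b b) :=
  ⟨⟨fun ⟨_, _, hQ⟩ => sub_pos_of_exp_eq_K_jc hab hQ,
    fun hx => ⟨_, isRate_K_jc_log_and_exp_eq hb hab hx⟩⟩,
   isRate_K_jc_log_and_exp_eq hb hab⟩

/-- A Jukes-Cantor Markov matrix `K(a,b,b,b)` is embeddable iff its eigenvalue
`x = a - b` is positive; and in that case it is JC-embeddable, with generator
`K((3/4)·log x, −(1/4)·log x, −(1/4)·log x, −(1/4)·log x)`. -/
theorem stmt_16 (a b : ℝ) (ha : 0 ≤ a) (hb : 0 ≤ b) (hab : a + 3 * b = 1) :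
    ((∃ Q : Matrix (Fin 4) (Fin 4) ℝ, IsRate Q ∧ NormedSpace.exp Q = K a b b b) ↔
      0 < a - b) ∧
    (0 < a - b →
      IsRate (K ((3 / 4) * Real.log (a - b)) (-(1 / 4) * Real.log (a - b))
        (-(1 / 4) * Real.log (a - b)) (-(1 / 4) * Real.log (a - b))) ∧
      NormedSpace.exp (K ((3 / 4) * Real.log (a - b)) (-(1 / 4) * Real.log (a - b))
        (-(1 / 4) * Real.log (a - b)) (-(1 / 4) * Real.log (a - b))) = K a b b b) :=
  stmt_16_general a b hb hab
end
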